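/- Let ℚ_0 = ℙ_0 and ℚ_n(x) = ℙ_n(x) − 𝖯_n(ξ) (I_N + Λ 𝐊_{n−1})^{−1} Λ 𝕂_{n−1}(ξ, x) for n ≥ 1, and let H_n = ⟨ℚ_n, ℚ_n^T⟩_ν denote the r_n^d × r_n^d matrix whose (k,l) entry is ⟨(ℚ_n)_k, (ℚ_n)_l⟩_ν. Then for every n ≥ 0, H_n = I_{r_n^d} + 𝖯_n(ξ) (I_N + Λ 𝐊_{n−1})^{−1} Λ 𝖯_n(ξ)^T, with the convention 𝐊_{−1} = 0. -/
import Mathlib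


open MeasureTheory MvPolynomial Matrix Finset

noncomputable section

/-- The space `Π_{n-1}^d` of real polynomials in `d` variables of total degree `< n`
(interpreted as the zero space for `n = 0`). -/
def piDegLT (d : ℕ) : ℕ → Submodule ℝ (MvPolynomial (Fin d) ℝ)
  | 0 => ⊥
  | n + 1 => MvPolynomial.restrictTotalDegree (Fin d) ℝ n

/-- The inner product `⟨p, q⟩_μ = ∫ p q dμ`. -/
def muInner {d : ℕ} (μ : Measure (Fin d → ℝ)) (p q : MvPolynomial (Fin d) ℝ) : ℝ :=
  ∫ x, eval x p * eval x q ∂μ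

/-- The inner product `⟨p, q⟩_ν = ⟨p, q⟩_μ + 𝐩(ξ)^T Λ 𝐪(ξ)`. -/
def nuInner {d N : ℕ} (μ : Measure (Fin d → ℝ)) (ξ : Fin N → (Fin d → ℝ))
    (Λ : Matrix (Fin N) (Fin N) ℝ) (p q : MvPolynomial (Fin d) ℝ) : ℝ :=
  muInner μ p q + (fun i => eval (ξ i) p) ⬝ᵥ Λ.mulVec (fun i => eval (ξ i) q)

/-- The reproducing kernel `K_n(dμ; x, y) = Σ_{j=0}^n ℙ_j(x)^T ℙ_j(y)` of `Π_n^d`. -/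
def Kmu {d : ℕ} (r : ℕ → ℕ) (P : (n : ℕ) → Fin (r n) → MvPolynomial (Fin d) ℝ)
    (n : ℕ) (x y : Fin d → ℝ) : ℝ :=
  ∑ j ∈ Finset.range (n + 1), ∑ k : Fin (r j), eval x (P j k) * eval y (P j k)

/-- `K_n(dμ; x, ·)` as a polynomial (in the second variable). -/
def kerPoly {d : ℕ} (r : ℕ → ℕ) (P : (n : ℕ) → Fin (r n) → MvPolynomial (Fin d) ℝ)
    (n : ℕ) (x : Fin d → ℝ) : MvPolynomial (Fin d) ℝ :=
  ∑ j ∈ Finset.range (n + 1), ∑ k : Fin (r j), (eval x (P j k)) • P j k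

/-- `K_{n-1}(dμ; x, ·)` as a polynomial, with the convention `K_{-1} = 0`. -/
def kerPolyM1 {d : ℕ} (r : ℕ → ℕ) (P : (n : ℕ) → Fin (r n) → MvPolynomial (Fin d) ℝ) :
    ℕ → (Fin d → ℝ) → MvPolynomial (Fin d) ℝ
  | 0, _ => 0
  | n + 1, x => kerPoly r P n x

/-- The matrix `𝐊_n = (K_n(dμ; ξ_i, ξ_j))_{i,j=1}^N`. -/
def bigK {d N : ℕ} (r : ℕ → ℕ) (P : (n : ℕ) → Fin (r n) → MvPolynomial (Fin d) ℝ)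
    (ξ : Fin N → (Fin d → ℝ)) (n : ℕ) : Matrix (Fin N) (Fin N) ℝ :=
  Matrix.of fun i j => Kmu r P n (ξ i) (ξ j)

/-- The matrix `𝐊_{n-1}`, with the convention `𝐊_{-1} = 0`. -/
def bigKm1 {d N : ℕ} (r : ℕ → ℕ) (P : (n : ℕ) → Fin (r n) → MvPolynomial (Fin d) ℝ)
    (ξ : Fin N → (Fin d → ℝ)) : ℕ → Matrix (Fin N) (Fin N) ℝ
  | 0 => 0
  | n + 1 => bigK r P ξ n

/-- The matrix `𝖯_n(ξ)` with columns `ℙ_n(ξ_1), …, ℙ_n(ξ_N)`. -/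
def Pmat {d N : ℕ} (r : ℕ → ℕ) (P : (n : ℕ) → Fin (r n) → MvPolynomial (Fin d) ℝ)
    (ξ : Fin N → (Fin d → ℝ)) (n : ℕ) : Matrix (Fin (r n)) (Fin N) ℝ :=
  Matrix.of fun k i => eval (ξ i) (P n k)

/-- `ℚ_n(x) = ℙ_n(x) − 𝖯_n(ξ) (I_N + Λ 𝐊_{n−1})^{−1} Λ 𝕂_{n−1}(ξ, x)`, entrywise, as
polynomials (for `n = 0` this reduces to `ℚ_0 = ℙ_0`). -/
def Qpoly {d N : ℕ} (r : ℕ → ℕ) (P : (n : ℕ) → Fin (r n) → MvPolynomial (Fin d) ℝ)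
    (ξ : Fin N → (Fin d → ℝ)) (Λ : Matrix (Fin N) (Fin N) ℝ)
    (n : ℕ) (k : Fin (r n)) : MvPolynomial (Fin d) ℝ :=
  P n k - ∑ i : Fin N,
    ((Pmat r P ξ n * (1 + Λ * bigKm1 r P ξ n)⁻¹ * Λ) k i) • kerPolyM1 r P n (ξ i)


/-! ### Auxiliary lemmas -/

section Aux

variable {d N : ℕ} {μ : Measure (Fin d → ℝ)}

lemma muInner_symm' (p q : MvPolynomial (Fin d) ℝ) : muInner μ p q = muInner μ q p := by
  simp [muInner, mul_comm]

lemma muInner_zero_right' (p : MvPolynomial (Fin d) ℝ) : muInner μ p 0 = 0 := by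
  simp [muInner]

lemma muInner_smul_left' (c : ℝ) (p q : MvPolynomial (Fin d) ℝ) :
    muInner μ (c • p) q = c * muInner μ p q := by
  unfold muInner
  simp only [smul_eval, mul_assoc]
  exact integral_const_mul c _

lemma muInner_smul_right' (c : ℝ) (p q : MvPolynomial (Fin d) ℝ) :
    muInner μ p (c • q) = c * muInner μ p q := by
  rw [muInner_symm', muInner_smul_left', muInner_symm']

variable (hint : ∀ p q : MvPolynomial (Fin d) ℝ, Integrable (fun x => eval x p * eval x q) μ)
include hint

lemma muInner_sub_left' (p p' q : MvPolynomial (Fin d) ℝ) :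
    muInner μ (p - p') q = muInner μ p q - muInner μ p' q := by
  unfold muInner
  simp only [map_sub, sub_mul]
  exact integral_sub (hint p q) (hint p' q)

lemma muInner_sum_left' {ι : Type*} (s : Finset ι) (f : ι → MvPolynomial (Fin d) ℝ)
    (q : MvPolynomial (Fin d) ℝ) :
    muInner μ (∑ i ∈ s, f i) q = ∑ i ∈ s, muInner μ (f i) q := by
  unfold muInner
  simp only [map_sum, Finset.sum_mul]
  exact integral_finset_sum s (fun i _ => hint (f i) q)

lemma muInner_sub_right' (p q q' : MvPolynomial (Fin d) ℝ) :
    muInner μ p (q - q') = muInner μ p q - muInner μ p q' := by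
  rw [muInner_symm', muInner_sub_left' hint, muInner_symm' q p, muInner_symm' q' p]

lemma muInner_sum_right' {ι : Type*} (s : Finset ι) (f : ι → MvPolynomial (Fin d) ℝ)
    (q : MvPolynomial (Fin d) ℝ) :
    muInner μ q (∑ i ∈ s, f i) = ∑ i ∈ s, muInner μ q (f i) := by
  rw [muInner_symm', muInner_sum_left' hint]
  exact Finset.sum_congr rfl fun i _ => muInner_symm' _ _

end Aux

section Aux2

variable {d N : ℕ} {μ : Measure (Fin d → ℝ)}
  {r : ℕ → ℕ} {P : (n : ℕ) → Fin (r n) → MvPolynomial (Fin d) ℝ}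

lemma P_cross
    (hdeg : ∀ n k, P n k ∈ MvPolynomial.restrictTotalDegree (Fin d) ℝ n)
    (horth : ∀ n k, ∀ q ∈ piDegLT d n, muInner μ (P n k) q = 0)
    {a b : ℕ} (h : a ≠ b) (k : Fin (r a)) (l : Fin (r b)) :
    muInner μ (P a k) (P b l) = 0 := by
  have main : ∀ a b : ℕ, a < b → ∀ (k : Fin (r a)) (l : Fin (r b)),
      muInner μ (P a k) (P b l) = 0 := by
    intro a b hab k l
    have hb : P a k ∈ piDegLT d b := by
      cases b with
      | zero => omega
      | succ m =>
        show P a k ∈ MvPolynomial.restrictTotalDegree (Fin d) ℝ m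
        rw [MvPolynomial.mem_restrictTotalDegree]
        have := hdeg a k
        rw [MvPolynomial.mem_restrictTotalDegree] at this
        omega
    rw [muInner_symm']
    exact horth b l _ hb
  rcases h.lt_or_gt with h | h
  · exact main a b h k l
  · rw [muInner_symm']
    exact main b a h l k

lemma kerPoly_mem (hdeg : ∀ n k, P n k ∈ MvPolynomial.restrictTotalDegree (Fin d) ℝ n)
    (n : ℕ) (x : Fin d → ℝ) :
    kerPoly r P n x ∈ MvPolynomial.restrictTotalDegree (Fin d) ℝ n := by
  refine Submodule.sum_mem _ fun j hj => Submodule.sum_mem _ fun k _ => ?_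
  refine Submodule.smul_mem _ _ ?_
  have := hdeg j k
  rw [MvPolynomial.mem_restrictTotalDegree] at this ⊢
  have hj' : j ≤ n := Nat.lt_succ_iff.mp (Finset.mem_range.mp hj)
  omega

lemma kerPolyM1_mem (hdeg : ∀ n k, P n k ∈ MvPolynomial.restrictTotalDegree (Fin d) ℝ n)
    (n : ℕ) (x : Fin d → ℝ) :
    kerPolyM1 r P n x ∈ piDegLT d n := by
  cases n with
  | zero => exact Submodule.zero_mem _
  | succ m => exact kerPoly_mem hdeg m x

lemma muInner_P_ker
    (hdeg : ∀ n k, P n k ∈ MvPolynomial.restrictTotalDegree (Fin d) ℝ n)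
    (horth : ∀ n k, ∀ q ∈ piDegLT d n, muInner μ (P n k) q = 0)
    (n : ℕ) (k : Fin (r n)) (x : Fin d → ℝ)  :
    muInner μ (P n k) (kerPolyM1 r P n x) = 0 :=
  horth n k _ (kerPolyM1_mem hdeg n x)

variable (hint : ∀ p q : MvPolynomial (Fin d) ℝ, Integrable (fun x => eval x p * eval x q) μ)
include hint

lemma muInner_ker_P
    (hdeg : ∀ n k, P n k ∈ MvPolynomial.restrictTotalDegree (Fin d) ℝ n)
    (horth : ∀ n k, ∀ q ∈ piDegLT d n, muInner μ (P n k) q = 0)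
    (honb : ∀ n (k l : Fin (r n)), muInner μ (P n k) (P n l) = if k = l then 1 else 0)
    (n : ℕ) (x : Fin d → ℝ) {b : ℕ} (hb : b ∈ Finset.range (n + 1)) (l : Fin (r b)) :
    muInner μ (kerPoly r P n x) (P b l) = eval x (P b l) := by
  classical
  unfold kerPoly
  rw [muInner_sum_left' hint]
  have hterm : ∀ a ∈ Finset.range (n + 1),
      muInner μ (∑ k : Fin (r a), (eval x (P a k)) • P a k) (P b l)
        = if a = b then eval x (P b l) else 0 := by
    intro a _
    rw [muInner_sum_left' hint]
    by_cases hab : a = b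
    · subst hab
      simp only [muInner_smul_left', honb, if_pos]
      simp [mul_ite]
    · simp only [muInner_smul_left', P_cross hdeg horth hab, mul_zero,
        Finset.sum_const_zero, if_neg hab]
  rw [Finset.sum_congr rfl hterm, Finset.sum_ite_eq' (Finset.range (n+1)) b, if_pos hb]

omit hint in
lemma eval_kerPoly (n : ℕ) (x y : Fin d → ℝ) :
    eval y (kerPoly r P n x) = Kmu r P n x y := by
  simp [kerPoly, Kmu, smul_eval]

lemma muInner_ker_ker
    (hdeg : ∀ n k, P n k ∈ MvPolynomial.restrictTotalDegree (Fin d) ℝ n)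
    (horth : ∀ n k, ∀ q ∈ piDegLT d n, muInner μ (P n k) q = 0)
    (honb : ∀ n (k l : Fin (r n)), muInner μ (P n k) (P n l) = if k = l then 1 else 0)
    (n : ℕ) (x y : Fin d → ℝ) :
    muInner μ (kerPolyM1 r P n x) (kerPolyM1 r P n y) = eval y (kerPolyM1 r P n x) := by
  cases n with
  | zero => simp [kerPolyM1, muInner_zero_right']
  | succ m =>
    show muInner μ (kerPoly r P m x) (kerPoly r P m y) = eval y (kerPoly r P m x)
    unfold kerPoly
    rw [muInner_sum_right' hint]
    simp only [muInner_sum_right' hint, muInner_smul_right']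
    have : ∀ b ∈ Finset.range (m + 1), ∀ l : Fin (r b),
        muInner μ (kerPoly r P m x) (P b l) = eval x (P b l) :=
      fun b hb l => muInner_ker_P hint hdeg horth honb m x hb l
    unfold kerPoly at this
    simp only [map_sum, smul_eval]
    refine Finset.sum_congr rfl fun b hb => Finset.sum_congr rfl fun l _ => ?_
    rw [this b hb l]
    ring

end Aux2

section Mat

variable {d N : ℕ} {r : ℕ → ℕ} {P : (n : ℕ) → Fin (r n) → MvPolynomial (Fin d) ℝ}
  {ξ : Fin N → (Fin d → ℝ)}

lemma bigKm1_transpose (n : ℕ) : (bigKm1 r P ξ n)ᵀ = bigKm1 r P ξ n := by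
  cases n with
  | zero => simp [bigKm1]
  | succ m =>
    ext i j
    simp [bigKm1, bigK, Kmu, mul_comm]

lemma bigKm1_posSemidef (n : ℕ) : (bigKm1 r P ξ n).PosSemidef := by
  cases n with
  | zero => simpa [bigKm1] using (Matrix.PosSemidef.zero (n := Fin N) (R := ℝ))
  | succ m =>
    have h : bigKm1 r P ξ (m + 1) =
        (Matrix.of fun (s : (a : Fin (m+1)) × Fin (r a)) i => eval (ξ i) (P s.1 s.2))ᴴ *
        (Matrix.of fun (s : (a : Fin (m+1)) × Fin (r a)) i => eval (ξ i) (P s.1 s.2)) := by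
      ext i j
      show Kmu r P m (ξ i) (ξ j) = _
      rw [Matrix.mul_apply, ← Finset.univ_sigma_univ, Finset.sum_sigma]
      rw [Kmu, ← Fin.sum_univ_eq_sum_range
        (fun a => ∑ k : Fin (r a), eval (ξ i) (P a k) * eval (ξ j) (P a k)) (m+1)]
      simp [Matrix.conjTranspose_apply]
    rw [h]
    exact Matrix.posSemidef_conjTranspose_mul_self _

lemma isUnit_oneAddMulK {Λ K : Matrix (Fin N) (Fin N) ℝ}
    (hΛ : Λ.PosDef) (hK : K.PosSemidef) : IsUnit (1 + Λ * K).det := by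
  have h1 : IsUnit Λ.det := isUnit_iff_ne_zero.2 hΛ.det_pos.ne'
  have h2 : (Λ⁻¹ + K).PosDef := hΛ.inv.add_posSemidef hK
  have h3 : 1 + Λ * K = Λ * (Λ⁻¹ + K) := by
    rw [Matrix.mul_add, Matrix.mul_nonsing_inv _ h1]
  rw [h3, Matrix.det_mul]
  exact h1.mul (isUnit_iff_ne_zero.2 h2.det_pos.ne')

lemma matid {m : ℕ} (Pm : Matrix (Fin m) (Fin N) ℝ) (Λ K : Matrix (Fin N) (Fin N) ℝ)
    (hΛ : Λᵀ = Λ) (hK : Kᵀ = K) (hdet : IsUnit (1 + Λ * K).det) :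
    (Pm * (1 + Λ * K)⁻¹ * Λ) * K * (Pm * (1 + Λ * K)⁻¹ * Λ)ᵀ +
      (Pm - Pm * (1 + Λ * K)⁻¹ * Λ * K) * Λ * (Pm - Pm * (1 + Λ * K)⁻¹ * Λ * K)ᵀ =
    Pm * (1 + Λ * K)⁻¹ * Λ * Pmᵀ := by
  set A := (1 + Λ * K)⁻¹ with hA
  have hAM : A * (1 + Λ * K) = 1 := Matrix.nonsing_inv_mul _ hdet
  have hMA : (1 + Λ * K) * A = 1 := Matrix.mul_nonsing_inv _ hdet
  have hE : Pm - Pm * A * Λ * K = Pm * A := by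
    have h2 : Pm * A + Pm * A * Λ * K = Pm := by
      have h3 := congrArg (fun X => Pm * X) hAM
      simpa [Matrix.mul_add, Matrix.mul_one, Matrix.mul_assoc] using h3
    exact sub_eq_iff_eq_add.mpr h2.symm
  have hTrans : (1 + Λ * K)ᵀ = 1 + K * Λ := by
    rw [Matrix.transpose_add, Matrix.transpose_one, Matrix.transpose_mul, hΛ, hK]
  have hAT : (1 + K * Λ) * Aᵀ = 1 := by
    have : Aᵀ * (1 + K * Λ) = 1 := by
      rw [← hTrans, ← Matrix.transpose_mul, hMA, Matrix.transpose_one]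
    exact mul_eq_one_comm.mp this
  rw [hE]
  calc (Pm * A * Λ) * K * (Pm * A * Λ)ᵀ + (Pm * A) * Λ * (Pm * A)ᵀ
      = Pm * A * Λ * ((K * Λ + 1) * (Aᵀ * Pmᵀ)) := by
        simp only [Matrix.transpose_mul, hΛ, Matrix.add_mul, Matrix.one_mul, Matrix.mul_add,
          Matrix.mul_one, Matrix.mul_assoc]
    _ = Pm * A * Λ * Pmᵀ := by
        rw [← Matrix.mul_assoc (K * Λ + 1), add_comm (K * Λ) 1, hAT, Matrix.one_mul]

end Mat

/-- With `ℚ_n` as above and `H_n = ⟨ℚ_n, ℚ_n^T⟩_ν`, for every `n ≥ 0`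
one has `H_n = I + 𝖯_n(ξ) (I_N + Λ 𝐊_{n−1})^{−1} Λ 𝖯_n(ξ)^T` (with `𝐊_{-1} = 0`). -/
theorem Hmat_eq
    {d N : ℕ} (hd : 1 ≤ d) (hN : 1 ≤ N)
    (μ : Measure (Fin d → ℝ))
    (hint : ∀ p q : MvPolynomial (Fin d) ℝ,
      Integrable (fun x => eval x p * eval x q) μ)
    (hpos : ∀ p : MvPolynomial (Fin d) ℝ, p ≠ 0 → 0 < ∫ x, (eval x p) ^ 2 ∂μ)
    (r : ℕ → ℕ) (hr : ∀ n, r n = Nat.choose (n + d - 1) n)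
    (P : (n : ℕ) → Fin (r n) → MvPolynomial (Fin d) ℝ)
    (hdeg : ∀ n k, P n k ∈ MvPolynomial.restrictTotalDegree (Fin d) ℝ n)
    (horth : ∀ n k, ∀ q ∈ piDegLT d n, muInner μ (P n k) q = 0)
    (honb : ∀ n (k l : Fin (r n)), muInner μ (P n k) (P n l) = if k = l then 1 else 0)
    (hspan : ∀ n, MvPolynomial.restrictTotalDegree (Fin d) ℝ n ≤
      Submodule.span ℝ {p | ∃ j, j ≤ n ∧ ∃ k, p = P j k})
    (ξ : Fin N → (Fin d → ℝ)) (hξ : Function.Injective ξ)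
    (Λ : Matrix (Fin N) (Fin N) ℝ) (hΛ : Λ.PosDef)
    (n : ℕ) :
    (Matrix.of fun k l : Fin (r n) =>
        nuInner μ ξ Λ (Qpoly r P ξ Λ n k) (Qpoly r P ξ Λ n l)) =
      1 + Pmat r P ξ n * (1 + Λ * bigKm1 r P ξ n)⁻¹ * Λ * (Pmat r P ξ n)ᵀ := by
  classical
  -- basic symmetry facts
  have hΛT : Λᵀ = Λ := by
    ext i j
    have h := congrFun (congrFun hΛ.1 i) j
    simpa using h
  have hKT : (bigKm1 r P ξ n)ᵀ = bigKm1 r P ξ n := bigKm1_transpose n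
  have hdet : IsUnit (1 + Λ * bigKm1 r P ξ n).det :=
    isUnit_oneAddMulK hΛ (bigKm1_posSemidef n)
  -- kernel facts
  have heval : ∀ i j, eval (ξ j) (kerPolyM1 r P n (ξ i)) = bigKm1 r P ξ n i j := by
    intro i j
    cases n with
    | zero => simp [kerPolyM1, bigKm1]
    | succ m => exact eval_kerPoly (r := r) (P := P) m (ξ i) (ξ j)
  have hRR : ∀ i j, muInner μ (kerPolyM1 r P n (ξ i)) (kerPolyM1 r P n (ξ j))
      = bigKm1 r P ξ n i j := fun i j =>
    (muInner_ker_ker hint hdeg horth honb n (ξ i) (ξ j)).trans (heval i j)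
  have hPR : ∀ (k : Fin (r n)) i, muInner μ (P n k) (kerPolyM1 r P n (ξ i)) = 0 :=
    fun k i => muInner_P_ker hdeg horth n k (ξ i)
  set K := bigKm1 r P ξ n with hKdef
  set Pm := Pmat r P ξ n with hPmdef
  set A := (1 + Λ * K)⁻¹ with hAdef
  set C := Pm * A * Λ with hCdef
  have hPmE : ∀ (k : Fin (r n)) i, Pm k i = eval (ξ i) (P n k) := fun _ _ => rfl
  -- evaluation of Q
  have hev : ∀ (k : Fin (r n)) i, eval (ξ i) (Qpoly r P ξ Λ n k) = (Pm - C * K) k i := by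
    intro k i
    unfold Qpoly
    simp only [← hKdef, ← hPmdef, ← hAdef, ← hCdef]
    rw [map_sub, map_sum]
    simp only [smul_eval, heval, Matrix.sub_apply, Matrix.mul_apply, hPmE]
  -- muInner of Q against Q
  have hmu : ∀ k l : Fin (r n), muInner μ (Qpoly r P ξ Λ n k) (Qpoly r P ξ Λ n l)
      = (if k = l then (1:ℝ) else 0) + ∑ i, ∑ j, C k i * C l j * K i j := by
    intro k l
    unfold Qpoly
    simp only [← hKdef, ← hPmdef, ← hAdef, ← hCdef]
    rw [muInner_sub_left' hint, muInner_sub_right' hint, muInner_sub_right' hint, honb n k l]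
    have h1 : muInner μ (P n k)
        (∑ i, C l i • kerPolyM1 r P n (ξ i)) = 0 := by
      rw [muInner_sum_right' hint]
      simp [muInner_smul_right', hPR]
    have h2 : muInner μ (∑ i, C k i • kerPolyM1 r P n (ξ i)) (P n l) = 0 := by
      rw [muInner_sum_left' hint]
      refine Finset.sum_eq_zero fun i _ => ?_
      rw [muInner_smul_left', muInner_symm', hPR l i, mul_zero]
    have h3 : muInner μ (∑ i, C k i • kerPolyM1 r P n (ξ i))
        (∑ j, C l j • kerPolyM1 r P n (ξ j)) = ∑ i, ∑ j, C k i * C l j * K i j := by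
      rw [muInner_sum_left' hint]
      refine Finset.sum_congr rfl fun i _ => ?_
      rw [muInner_smul_left', muInner_sum_right' hint, Finset.mul_sum]
      refine Finset.sum_congr rfl fun j _ => ?_
      rw [muInner_smul_right', hRR i j]
      ring
    rw [h1, h2, h3]
    ring
  -- entrywise identity
  have key : (Matrix.of fun k l : Fin (r n) =>
        nuInner μ ξ Λ (Qpoly r P ξ Λ n k) (Qpoly r P ξ Λ n l)) =
      1 + (C * K * Cᵀ + (Pm - C * K) * Λ * (Pm - C * K)ᵀ) := by
    ext k l
    simp only [Matrix.of_apply]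
    unfold nuInner
    rw [hmu k l]
    have hdot : (fun i => eval (ξ i) (Qpoly r P ξ Λ n k)) ⬝ᵥ
        Λ.mulVec (fun i => eval (ξ i) (Qpoly r P ξ Λ n l))
        = ∑ i, ∑ j, (Pm - C * K) k i * (Λ i j * (Pm - C * K) l j) := by
      simp only [dotProduct, Matrix.mulVec, hev, Finset.mul_sum]
    rw [hdot]
    have hs1 : (C * K * Cᵀ) k l = ∑ i, ∑ j, C k i * C l j * K i j := by
      simp only [Matrix.mul_apply, Matrix.transpose_apply, Finset.sum_mul]
      rw [Finset.sum_comm]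
      exact Finset.sum_congr rfl fun i _ => Finset.sum_congr rfl fun j _ => by ring
    have hs2 : ((Pm - C * K) * Λ * (Pm - C * K)ᵀ) k l
        = ∑ i, ∑ j, (Pm - C * K) k i * (Λ i j * (Pm - C * K) l j) := by
      simp only [Matrix.mul_apply, Matrix.transpose_apply, Finset.sum_mul]
      rw [Finset.sum_comm]
      exact Finset.sum_congr rfl fun i _ => Finset.sum_congr rfl fun j _ => by ring
    simp only [Matrix.add_apply, Matrix.one_apply, hs1, hs2]
    ring
  rw [key, matid Pm Λ K hΛT hKT hdet]
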